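/- arXiv:1802.05331 — 7 statements merged into one kernel-verified Lean document; each statement's English description precedes it below -/
import Mathlib

section
/- Let G be a finite simple graph with no isolated vertices containing no set of three pairwise disjoint edges (matching number at most 2), and let v be a vertex of G with degree at least 5. Then the graph obtained from G by deleting v, all edges incident to v, and any resulting isolated vertices is either empty, a star, or a triangle. -/
/-!
Two disjoint edges of `G` missing `v` cover at most four of the at least five neighbours of `v`,
so an edge from `v` to an uncovered neighbour would make three disjoint edges. Hence the edges of
`G - v` pairwise intersect, and a pairwise intersecting family of edges is a star or a triangle:
if it is not a star at either end of an edge `ab`, it contains edges `bc` and `ac'` with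
`c, c' ∉ {a, b}`, which must meet, so `c = c'`; an edge meeting all three sides of the triangle
`abc` lies in it.
-/

namespace SimpleGraph

variable {V : Type*}

def EdgesPairwiseIntersect (H : SimpleGraph V) : Prop :=
  ∀ ⦃a b c d : V⦄, H.Adj a b → H.Adj c d → a = c ∨ a = d ∨ b = c ∨ b = d

lemma edgesPairwiseIntersect_deleteIncidenceSet [Fintype V] (G : SimpleGraph V)
    [DecidableRel G.Adj]
    (h_no_three_disjoint : ¬ ∃ a b c d e f : V,
      G.Adj a b ∧ G.Adj c d ∧ G.Adj e f ∧
      a ≠ c ∧ a ≠ d ∧ a ≠ e ∧ a ≠ f ∧ b ≠ c ∧ b ≠ d ∧ b ≠ e ∧ b ≠ f ∧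
      c ≠ e ∧ c ≠ f ∧ d ≠ e ∧ d ≠ f)
    (v : V) (hv : 5 ≤ G.degree v) : (G.deleteIncidenceSet v).EdgesPairwiseIntersect := by
  classical
  intro a b c d hab hcd
  rw [deleteIncidenceSet_adj] at hab hcd
  by_contra! hdisj
  have hcard : ({a, b, c, d} : Finset V).card < (G.neighborFinset v).card := by
    rw [card_neighborFinset_eq_degree]
    exact Finset.card_le_four.trans_lt hv
  obtain ⟨w, hvw, hw⟩ := Finset.exists_mem_notMem_of_card_lt_card hcard
  simp only [mem_neighborFinset, Finset.mem_insert, Finset.mem_singleton, not_or] at hvw hw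
  exact h_no_three_disjoint ⟨a, b, c, d, v, w, hab.1, hcd.1, hvw, by grind⟩

namespace EdgesPairwiseIntersect

variable {H : SimpleGraph V} (hH : H.EdgesPairwiseIntersect)
include hH

lemma exists_adj_ne_of_avoiding_edge {a b c d : V} (hab : H.Adj a b) (hcd : H.Adj c d)
    (hca : c ≠ a) (hda : d ≠ a) : ∃ w, w ≠ a ∧ H.Adj b w := by
  rcases hH hab hcd with h | h | rfl | rfl
  · exact absurd h.symm hca
  · exact absurd h.symm hda
  · exact ⟨d, hda, hcd⟩
  · exact ⟨c, hca, hcd.symm⟩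

lemma mem_of_adj_of_triangle {x y z p q : V} (hxy : H.Adj x y) (hyz : H.Adj y z)
    (hxz : H.Adj x z) (hpq : H.Adj p q) : p = x ∨ p = y ∨ p = z := by
  have := hH hpq hxy
  have := hH hpq hyz
  have := hH hpq hxz
  grind [hxy.ne, hyz.ne, hxz.ne]

lemma edgeSet_eq_of_triangle {x y z : V} (hxy : H.Adj x y) (hyz : H.Adj y z)
    (hxz : H.Adj x z) : H.edgeSet = {s(x, y), s(y, z), s(x, z)} := by
  ext e
  induction e using Sym2.ind with
  | _ p q =>
    simp only [mem_edgeSet, Set.mem_insert_iff, Set.mem_singleton_iff, Sym2.eq_iff]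
    constructor
    · intro hpq
      have hp := hH.mem_of_adj_of_triangle hxy hyz hxz hpq
      have hq := hH.mem_of_adj_of_triangle hxy hyz hxz hpq.symm
      grind [hpq.ne]
    · rintro ((⟨rfl, rfl⟩ | ⟨rfl, rfl⟩) | (⟨rfl, rfl⟩ | ⟨rfl, rfl⟩) | (⟨rfl, rfl⟩ | ⟨rfl, rfl⟩))
      all_goals first | assumption | exact H.adj_symm ‹_›

lemma support_eq_empty_or_star_or_triangle :
    H.support = ∅ ∨ (∃ x ∈ H.support, ∀ a b, H.Adj a b → a = x ∨ b = x) ∨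
      ∃ x y z, H.Adj x y ∧ H.Adj y z ∧ H.Adj x z ∧ H.edgeSet = {s(x, y), s(y, z), s(x, z)} := by
  rcases H.support.eq_empty_or_nonempty with hempty | ⟨a, b, hab⟩
  · exact Or.inl hempty
  by_cases hstar_a : ∀ p q, H.Adj p q → p = a ∨ q = a
  · exact Or.inr (Or.inl ⟨a, ⟨b, hab⟩, hstar_a⟩)
  by_cases hstar_b : ∀ p q, H.Adj p q → p = b ∨ q = b
  · exact Or.inr (Or.inl ⟨b, ⟨a, hab.symm⟩, hstar_b⟩)
  push Not at hstar_a hstar_b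
  obtain ⟨p, q, hpq, hpa, hqa⟩ := hstar_a
  obtain ⟨p', q', hpq', hpb, hqb⟩ := hstar_b
  obtain ⟨c, hca, hbc⟩ := hH.exists_adj_ne_of_avoiding_edge hab hpq hpa hqa
  obtain ⟨c', hcb, hac'⟩ := hH.exists_adj_ne_of_avoiding_edge hab.symm hpq' hpb hqb
  obtain rfl : c = c' :=
    (((hH hbc hac').resolve_left hab.ne.symm).resolve_left hcb.symm).resolve_left hca
  exact Or.inr (Or.inr ⟨a, b, c, hab, hbc, hac', hH.edgeSet_eq_of_triangle hab hbc hac'⟩)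

end EdgesPairwiseIntersect

end SimpleGraph

theorem delete_high_degree_vertex_general {V : Type*} [Fintype V]
    (G : SimpleGraph V) [DecidableRel G.Adj]
    (h_no_three_disjoint : ¬ ∃ a b c d e f : V,
      G.Adj a b ∧ G.Adj c d ∧ G.Adj e f ∧
      a ≠ c ∧ a ≠ d ∧ a ≠ e ∧ a ≠ f ∧ b ≠ c ∧ b ≠ d ∧ b ≠ e ∧ b ≠ f ∧
      c ≠ e ∧ c ≠ f ∧ d ≠ e ∧ d ≠ f)
    (v : V) (hv : 5 ≤ G.degree v)
    (S : Set V) (hS : S = {w : V | w ≠ v ∧ ∃ u : V, u ≠ v ∧ G.Adj w u}) :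
    (S = ∅) ∨
    (∃ x ∈ S, ∀ a b : V, a ∈ S → b ∈ S → G.Adj a b → a = x ∨ b = x) ∨
    (∃ x y z : V, x ∈ S ∧ y ∈ S ∧ z ∈ S ∧ x ≠ y ∧ y ≠ z ∧ x ≠ z ∧
      ∀ a b : V, a ∈ S → b ∈ S →
        (G.Adj a b ↔ s(a, b) ∈ ({s(x, y), s(y, z), s(x, z)} : Set (Sym2 V)))) := by
  set H := G.deleteIncidenceSet v
  have hSH : S = H.support := by
    ext w
    simp only [hS, SimpleGraph.mem_support, H, SimpleGraph.deleteIncidenceSet_adj]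
    grind
  have hadj : ∀ a ∈ S, ∀ b ∈ S, G.Adj a b ↔ H.Adj a b := by
    rw [hS]
    intro a ha b hb
    simp [H, SimpleGraph.deleteIncidenceSet_adj, ha.1, hb.1]
  rw [hSH] at hadj ⊢
  have hH := SimpleGraph.edgesPairwiseIntersect_deleteIncidenceSet G h_no_three_disjoint v hv
  rcases hH.support_eq_empty_or_star_or_triangle with
    hempty | ⟨x, hx, hstar⟩ | ⟨x, y, z, hxy, hyz, hxz, hedges⟩
  · exact Or.inl hempty
  · exact Or.inr (Or.inl ⟨x, hx, fun a b ha hb hab => hstar a b ((hadj a ha b hb).1 hab)⟩)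
  · refine Or.inr (Or.inr ⟨x, y, z, ⟨y, hxy⟩, ⟨z, hyz⟩, ⟨x, hxz.symm⟩, hxy.ne, hyz.ne, hxz.ne,
      fun a b ha hb => ?_⟩)
    rw [hadj a ha b hb, ← SimpleGraph.mem_edgeSet, hedges]

/-- If a finite simple graph without isolated vertices has no three pairwise
disjoint edges and `v` is a vertex of degree at least `5`, then deleting `v`,
its incident edges, and any resulting isolated vertices leaves a graph that is
empty, a star, or a triangle.  Here `S` is the vertex set remaining after the
deletion, and edges of the remaining graph are edges of `G` between vertices of
`S`. -/
theorem delete_high_degree_vertex {V : Type*} [Fintype V] [DecidableEq V]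
    (G : SimpleGraph V) [DecidableRel G.Adj]
    (h_no_isolated : ∀ v : V, ∃ w : V, G.Adj v w)
    (h_no_three_disjoint : ¬ ∃ a b c d e f : V,
      G.Adj a b ∧ G.Adj c d ∧ G.Adj e f ∧
      a ≠ c ∧ a ≠ d ∧ a ≠ e ∧ a ≠ f ∧ b ≠ c ∧ b ≠ d ∧ b ≠ e ∧ b ≠ f ∧
      c ≠ e ∧ c ≠ f ∧ d ≠ e ∧ d ≠ f)
    (v : V) (hv : 5 ≤ G.degree v)
    (S : Set V) (hS : S = {w : V | w ≠ v ∧ ∃ u : V, u ≠ v ∧ G.Adj w u}) :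
    (S = ∅) ∨
    (∃ x ∈ S, ∀ a b : V, a ∈ S → b ∈ S → G.Adj a b → a = x ∨ b = x) ∨
    (∃ x y z : V, x ∈ S ∧ y ∈ S ∧ z ∈ S ∧ x ≠ y ∧ y ≠ z ∧ x ≠ z ∧
      ∀ a b : V, a ∈ S → b ∈ S →
        (G.Adj a b ↔ s(a, b) ∈ ({s(x, y), s(y, z), s(x, z)} : Set (Sym2 V)))) :=
  delete_high_degree_vertex_general G h_no_three_disjoint v hv S hS
end

section
/- For natural numbers a, b, c with b ≥ 1, the double sum ∑_{i=0}^{b} ∑_{j=0}^{a} C(a,j)·C(b,i)·(i+j)!·(b+c−i)·(a+2b+c−i−j−1)! / (a+2b+c)! equals 1 − b/((b+c+1)(b+c)), as an identity of rational numbers. -/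
/-!
`betaFactorial i m = i! m! / (i + m + 1)!` is the Beta integral `∫₀¹ xⁱ (1 - x)ᵐ dx`, so splitting
`1 = x + (1 - x)` gives the Pascal-type recurrence `B(i, m) = B(i + 1, m) + B(i, m + 1)`. Any
function with this recurrence satisfies `∑ⱼ C(a, j) f(i + j, a - j + m) = f(i, m)`. Applied with
`f = B`, this collapses the sum over `j`; splitting the weight `b + c - i` and using
`i C(b, i) = b C(b - 1, i - 1)`, the sum over `i` collapses to `(b + c) B(0, b + c - 1) - b B(1, b + c - 1)`.
-/

open Finset Nat

section PascalRecurrence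

variable {R : Type*} [Semiring R] {f : ℕ → ℕ → R}

theorem sum_range_choose_mul_eq_of_pascal_recurrence
    (hf : ∀ i m, f i m = f (i + 1) m + f i (m + 1)) (a i m : ℕ) :
    ∑ j ∈ range (a + 1), (a.choose j : R) * f (i + j) (a - j + m) = f i m := by
  induction a generalizing i m with
  | zero => simp
  | succ a ih =>
    refine (sum_choose_succ_mul (fun j k => f (i + j) (k + m)) a).trans ?_
    rw [hf, ← ih (i + 1) m, ← ih i (m + 1), add_comm]
    congr 1 <;> refine sum_congr rfl fun j hj => ?_ <;> rw [mem_range] at hj <;> congr 2 <;> omega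

theorem sum_range_mul_choose_mul_eq_of_pascal_recurrence
    (hf : ∀ i m, f i m = f (i + 1) m + f i (m + 1)) (b m : ℕ) :
    ∑ i ∈ range (b + 1), (i * b.choose i : R) * f i (b - i + m) = b * f 1 m := by
  cases b with
  | zero => simp
  | succ b =>
    rw [sum_range_succ', ← sum_range_choose_mul_eq_of_pascal_recurrence hf b 1 m, mul_sum]
    simp only [cast_zero, zero_mul, add_zero]
    refine sum_congr rfl fun k _ => ?_
    have hchoose : (k + 1) * (b + 1).choose (k + 1) = (b + 1) * b.choose k :=
      (mul_comm _ _).trans (add_one_mul_choose_eq b k).symm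
    rw [← mul_assoc, ← Nat.cast_mul, ← Nat.cast_mul, hchoose, add_comm 1 k,
      Nat.add_sub_add_right]

end PascalRecurrence

def betaFactorial (i m : ℕ) : ℚ := i ! * m ! / (i + m + 1)!

theorem betaFactorial_eq_add (i m : ℕ) :
    betaFactorial i m = betaFactorial (i + 1) m + betaFactorial i (m + 1) := by
  have hsum : i + 1 + m + 1 = i + m + 1 + 1 := by ring
  have hsum' : i + (m + 1) + 1 = i + m + 1 + 1 := by ring
  simp only [betaFactorial, hsum, hsum', factorial_succ]
  push_cast
  field_simp
  ring

theorem betaFactorial_zero_left (n : ℕ) : betaFactorial 0 n = 1 / (n + 1) := by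
  simp only [betaFactorial, zero_add, factorial_zero, factorial_succ]
  push_cast
  field_simp

theorem betaFactorial_one_left (n : ℕ) : betaFactorial 1 n = 1 / ((n + 2) * (n + 1)) := by
  simp only [betaFactorial, add_comm 1 n, factorial_succ]
  push_cast
  field_simp
  ring

theorem GS_top_double_sum (a b c : ℕ) (hb : 1 ≤ b) :
    ∑ i ∈ Finset.range (b + 1), ∑ j ∈ Finset.range (a + 1),
        ((a.choose j : ℚ) * (b.choose i) * (i + j)! * (b + c - i)
            * (a + 2 * b + c - i - j - 1)!) / ((a + 2 * b + c)! : ℚ)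
      = 1 - (b : ℚ) / (((b : ℚ) + c + 1) * ((b : ℚ) + c)) := by
  obtain ⟨n, hn⟩ : ∃ n, b + c = n + 1 := ⟨b + c - 1, by omega⟩
  have hinner : ∀ i ∈ range (b + 1), ∑ j ∈ range (a + 1),
      ((a.choose j : ℚ) * (b.choose i) * (i + j)! * (b + c - i)
          * (a + 2 * b + c - i - j - 1)!) / ((a + 2 * b + c)! : ℚ)
        = ((b + c : ℚ) - i) * (b.choose i * betaFactorial i (b - i + n)) := by
    intro i hi
    rw [← sum_range_choose_mul_eq_of_pascal_recurrence betaFactorial_eq_add a, mul_sum, mul_sum]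
    refine sum_congr rfl fun j hj => ?_
    rw [mem_range] at hi hj
    have hq : a + 2 * b + c - i - j - 1 = a - j + (b - i + n) := by omega
    have hN : a + 2 * b + c = i + j + (a - j + (b - i + n)) + 1 := by omega
    rw [hq, hN, betaFactorial]
    ring
  have hnq : (b + c : ℚ) = n + 1 := by exact_mod_cast hn
  calc _ = ∑ i ∈ range (b + 1), ((b + c : ℚ) - i) * (b.choose i * betaFactorial i (b - i + n)) :=
        sum_congr rfl hinner
    _ = (b + c) * ∑ i ∈ range (b + 1), (b.choose i : ℚ) * betaFactorial (0 + i) (b - i + n)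
          - ∑ i ∈ range (b + 1), (i * b.choose i : ℚ) * betaFactorial i (b - i + n) := by
        simp only [zero_add, mul_sum, ← sum_sub_distrib, sub_mul, mul_assoc]
    _ = (b + c) * betaFactorial 0 n - b * betaFactorial 1 n := by
        rw [sum_range_choose_mul_eq_of_pascal_recurrence betaFactorial_eq_add,
          sum_range_mul_choose_mul_eq_of_pascal_recurrence betaFactorial_eq_add]
    _ = _ := by
        rw [betaFactorial_zero_left, betaFactorial_one_left, hnq]
        field_simp
        ring
end

section
/- For natural numbers b and c with b+c ≥ 1, ∑_{i=0}^{b} (b+c−i)·C(2b+c−1−i, b+c−1) = (b+c)·C(2b+c, b+c) − C(2b+c, b+c+1). -/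
/-!
Reversing the order of summation (`j = b - i`) and writing `b + c = n + 1` turns the sum into
`∑_{j ≤ b} (c + j) * C(j + n, n)`, a weighted hockey stick which equals
`c * C(2b + c, b + c) + (b + c) * C(2b + c, b + c + 1)`. The absorption identity
`(k + 1) * C(N, k + 1) = (N - k) * C(N, k)` with `N - k = b` then rewrites
`(b + c) * C(2b + c, b + c)` as that expression plus `C(2b + c, b + c + 1)`.
-/

open Finset Nat

theorem sum_range_add_mul_add_choose (n c m : ℕ) :
    ∑ j ∈ range (m + 1), (c + j) * (j + n).choose n
      = c * (m + n + 1).choose (n + 1) + (n + 1) * (m + n + 1).choose (n + 2) := by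
  induction m with
  | zero => simp
  | succ m ih =>
    have pascal₁ := choose_succ_succ' (m + n + 1) n
    have pascal₂ : (m + n + 1 + 1).choose (n + 2) = _ := choose_succ_succ' (m + n + 1) (n + 1)
    have absorb : (m + n + 1).choose (n + 1) * (n + 1) = (m + n + 1).choose n * (m + 1) := by
      rw [choose_succ_right_eq, show m + n + 1 - n = m + 1 by omega]
    rw [sum_range_succ, ih, show m + 1 + n + 1 = m + n + 1 + 1 by omega, pascal₁, pascal₂,
      show m + 1 + n = m + n + 1 by omega]
    linear_combination absorb.symm

theorem GS_inner_sum (b c : ℕ) (hbc : 1 ≤ b + c) :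
    ∑ i ∈ Finset.range (b + 1), (b + c - i) * (2 * b + c - 1 - i).choose (b + c - 1)
      = (b + c) * (2 * b + c).choose (b + c) - (2 * b + c).choose (b + c + 1) := by
  obtain ⟨n, hn⟩ : ∃ n, b + c = n + 1 := ⟨b + c - 1, by omega⟩
  have reflect : ∑ i ∈ range (b + 1), (b + c - i) * (2 * b + c - 1 - i).choose (b + c - 1)
      = ∑ j ∈ range (b + 1), (c + j) * (j + n).choose n := by
    rw [← sum_range_reflect]
    refine sum_congr rfl fun j hj => ?_
    have := mem_range.mp hj
    congr 2 <;> omega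
  have absorb : (2 * b + c).choose (b + c + 1) * (b + c + 1) = (2 * b + c).choose (b + c) * b := by
    rw [choose_succ_right_eq, show 2 * b + c - (b + c) = b by omega]
  rw [reflect, sum_range_add_mul_add_choose, show b + n + 1 = 2 * b + c by omega,
    show n + 2 = b + c + 1 by omega, ← hn]
  refine Nat.eq_sub_of_add_eq ?_
  linear_combination absorb
end

section
/- Define f(a,b,c) = b/((b+c+1)(b+c)) + b/((a+b+1)(a+b)) for positive integers a, b, c (a rational number). Then for all positive integers s, t such that s divides 2t(t+1), setting r = 2t(t+1)/s, one has f(r+3t+1, s, t) = f(t, r+s+2t+1, t) = f(3t+s+1, r, t). -/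
/-!
With `N = r + s + 3t + 1`, the relation `s r = 2t(t + 1)` is exactly what makes
`s / ((s + t + 1)(s + t)) = (s + 2(r + 2t + 1)) / ((N + 1) N)`. Hence
`f(r + 3t + 1, s, t)` is a single fraction over `(N + 1) N`, namely `2(r + s + 2t + 1) / ((N + 1) N)`,
which is `f(t, r + s + 2t + 1, t)`. That value is symmetric in `s` and `r`, so exchanging their
roles gives the second equality.
-/

/-- `f a b c` is the probability `P(GS_{a,b,c},1)` of one tree in the forest
building process on the glued stars `GS_{a,b,c}`. -/
def f (a b c : ℕ) : ℚ :=
  (b : ℚ) / (((b : ℚ) + c + 1) * ((b : ℚ) + c))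
    + (b : ℚ) / (((a : ℚ) + b + 1) * ((a : ℚ) + b))

theorem div_eq_div_of_mul_eq_two_mul_mul_succ {K : Type*} [Field K] {s r t : K}
    (h : s * r = 2 * t * (t + 1)) (hst : (s + t + 1) * (s + t) ≠ 0)
    (hN : (r + s + 3 * t + 2) * (r + s + 3 * t + 1) ≠ 0) :
    s / ((s + t + 1) * (s + t))
      = (s + 2 * (r + 2 * t + 1)) / ((r + s + 3 * t + 2) * (r + s + 3 * t + 1)) := by
  rw [div_eq_div_iff hst hN]
  linear_combination (r + 2 * t + 1) * h

theorem f_eq_f_of_mul_eq {s r t : ℕ} (ht : 0 < t) (h : s * r = 2 * t * (t + 1)) :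
    f (r + 3 * t + 1) s t = f t (r + s + 2 * t + 1) t := by
  have hQ : (s : ℚ) * r = 2 * t * (t + 1) := by exact_mod_cast h
  unfold f
  push_cast
  rw [div_eq_div_of_mul_eq_two_mul_mul_succ hQ (by positivity) (by positivity)]
  ring

theorem famA (s t : ℕ) (hs : 0 < s) (ht : 0 < t) (hdvd : s ∣ 2 * t * (t + 1)) :
    f (2 * t * (t + 1) / s + 3 * t + 1) s t
        = f t (2 * t * (t + 1) / s + s + 2 * t + 1) t ∧
      f (2 * t * (t + 1) / s + 3 * t + 1) s t
        = f (3 * t + s + 1) (2 * t * (t + 1) / s) t := by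
  obtain ⟨r, hr⟩ := hdvd
  rw [hr, Nat.mul_div_cancel_left r hs]
  have hmid := f_eq_f_of_mul_eq ht hr.symm
  have hswap := f_eq_f_of_mul_eq ht ((mul_comm r s).trans hr.symm)
  refine ⟨hmid, hmid.trans ?_⟩
  rw [show 3 * t + s + 1 = s + 3 * t + 1 by ring, hswap, add_comm s r]
end

section
/- Define f(a,b,c) = b/((b+c+1)(b+c)) + b/((a+b+1)(a+b)) for positive integers a, b, c. Then for every positive integer t, f(5t+3, t, 2t) = f(5t+1, t+1, 2t+1). -/
theorem famB (t : ℕ) (ht : 0 < t) :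
    f (5 * t + 3) t (2 * t) = f (5 * t + 1) (t + 1) (2 * t + 1) := by
  have ht : (0 : ℚ) < t := mod_cast ht
  unfold f
  push_cast
  field_simp
  ring
end

section
/- For the formula P(K_n,k) = C(n−1; n−2k, k, k−1)·2^{n−2k} / C(2n−2, n) (with multinomial coefficient C(n−1; n−2k, k, k−1) = (n−1)!/((n−2k)!·k!·(k−1)!)), the probabilities sum to 1: for every n ≥ 2, ∑_{k=1}^{⌊n/2⌋} (n−1)!·2^{n−2k} / ((n−2k)!·k!·(k−1)!) = C(2n−2, n). -/
open Finset Nat Polynomial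

/-!
Expand `(1 + X) ^ (2n - 2) = (1 + X (X + 2)) ^ (n - 1)` and read off the coefficient of `X ^ n`:
the summand `C(n-1, i) X^i (X + 2)^i` contributes `C(n-1, i) C(i, k) 2^(i-k)` with `i + k = n`,
and `C(n-1, n-k) C(n-k, k)` is the multinomial coefficient `(n-1)! / ((n-2k)! k! (k-1)!)`.
-/

theorem Nat.choose_two_mul_eq_sum_antidiagonal (m j : ℕ) :
    (2 * m).choose j
      = ∑ p ∈ antidiagonal j, m.choose p.1 * p.1.choose p.2 * 2 ^ (p.1 - p.2) := by
  have hexpand : (1 + X : ℕ[X]) ^ (2 * m)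
      = ∑ i ∈ range (m + 1), X ^ i * (X + C 2) ^ i * (m.choose i : ℕ[X]) := by
    have hsq : (1 + X : ℕ[X]) ^ 2 = X * (X + C 2) + 1 := by
      rw [show (C 2 : ℕ[X]) = 2 from rfl]; ring
    simp only [pow_mul, hsq, add_pow, one_pow, mul_one, mul_pow]
  have hcoeff (i : ℕ) : (X ^ i * (X + C 2) ^ i * (m.choose i : ℕ[X])).coeff j
      = if i ≤ j then m.choose i * i.choose (j - i) * 2 ^ (i - (j - i)) else 0 := by
    rw [← C_eq_natCast, coeff_mul_C, coeff_X_pow_mul', coeff_X_add_C_pow]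
    split_ifs <;> simp only [Nat.cast_id] <;> ring
  rw [← Nat.cast_id ((2 * m).choose j), ← coeff_one_add_X_pow, hexpand, finsetSum_coeff,
    sum_antidiagonal_eq_sum_range_succ (fun i k => m.choose i * i.choose k * 2 ^ (i - k))]
  simp only [hcoeff, sum_ite, sum_const_zero, add_zero]
  refine sum_subset (fun i hi => ?_) fun i hi hi' => ?_
  · simp only [mem_filter, mem_range] at hi ⊢
    omega
  · simp only [mem_filter, mem_range, not_and_or] at hi hi'
    rw [choose_eq_zero_of_lt (by omega), zero_mul, zero_mul]

theorem Nat.choose_mul_choose_mul_factorial_mul_factorial_mul_factorial (a b c : ℕ) :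
    (a + b + c).choose (a + b) * (a + b).choose a * (a ! * b ! * c !) = (a + b + c)! := by
  rw [← choose_mul_factorial_mul_factorial (le_add_right (a + b) c),
    ← choose_mul_factorial_mul_factorial (le_add_right a b), Nat.add_sub_cancel_left,
    Nat.add_sub_cancel_left]
  ring

theorem Nat.choose_two_mul_sub_two_eq_sum_Icc {n : ℕ} (hn : 1 ≤ n) :
    (2 * n - 2).choose n
      = ∑ k ∈ Icc 1 (n / 2), (n - 1).choose (n - k) * (n - k).choose k * 2 ^ (n - 2 * k) := by
  rw [show 2 * n - 2 = 2 * (n - 1) by omega, choose_two_mul_eq_sum_antidiagonal,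
    ← Finset.Nat.sum_antidiagonal_swap]
  simp only [Prod.fst_swap, Prod.snd_swap]
  rw [sum_antidiagonal_eq_sum_range_succ (fun k i => (n - 1).choose i * i.choose k * 2 ^ (i - k))]
  refine (sum_subset (fun k hk => ?_) fun k hk hk' => ?_).symm.trans (sum_congr rfl fun k hk => ?_)
  · simp only [mem_Icc, mem_range] at hk ⊢
    omega
  · simp only [mem_Icc, mem_range, not_and_or, not_le] at hk hk'
    rcases hk' with hk0 | hkn
    · rw [choose_eq_zero_of_lt (show n - 1 < n - k by omega)]
      simp
    · rw [choose_eq_zero_of_lt (show n - k < k by omega)]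
      simp
  · rw [show n - k - k = n - 2 * k by omega]

/-- The forest-building probabilities for the complete graph `K_n` sum to `1`:
`∑_{k=1}^{⌊n/2⌋} (n-1)! 2^(n-2k) / ((n-2k)! k! (k-1)!) = C(2n-2, n)`. -/
theorem Kn_prob_sum (n : ℕ) (hn : 2 ≤ n) :
    ∑ k ∈ Finset.Icc 1 (n / 2),
        (((n - 1)! : ℚ) * 2 ^ (n - 2 * k))
          / (((n - 2 * k)! : ℚ) * (k ! : ℚ) * ((k - 1)! : ℚ))
      = ((2 * n - 2).choose n : ℚ) := by
  rw [choose_two_mul_sub_two_eq_sum_Icc (by omega), Nat.cast_sum]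
  refine sum_congr rfl fun k hk => ?_
  obtain ⟨hk, hkn⟩ := mem_Icc.mp hk
  have htri := choose_mul_choose_mul_factorial_mul_factorial_mul_factorial k (n - 2 * k) (k - 1)
  rw [show k + (n - 2 * k) + (k - 1) = n - 1 by omega, show k + (n - 2 * k) = n - k by omega]
    at htri
  rw [← htri]
  field_simp
  push_cast
  ring
end

section
/- For natural numbers a, b, c with b ≥ 1 and symmetric counterpart: ∑_{i=0}^{b} ∑_{j=0}^{c} C(c,j)·C(b,i)·(i+j)!·(a+b−i)·(a+2b+c−i−j−1)! / (a+2b+c)! = 1 − b/((b+a+1)(b+a)), as rational numbers. -/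
/-!
With the Beta values `β(p, q) = p! q! / (p + q + 1)! = ∫₀¹ xᵖ (1 - x)^q dx`, the recurrence
`β(p, q) = β(p + 1, q) + β(p, q + 1)` iterates to `∑ⱼ C(c, j) β(p + j, q + c - j) = β(p, q)`.
This collapses the sum over `j` to `∑ᵢ C(b, i) (a + b - i) β(i, a + 2b - 1 - i)`.
Writing `a + b - i = (a + 2b - i) - b` and using
`(a + 2b - i) β(i, a + 2b - 1 - i) = (a + 2b + 1) β(i, a + 2b - i)` splits it into two sums
of the same shape, equal to `(a + 2b + 1) / (a + b + 1)` and `b / (a + b)`.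
-/

open Finset Nat

theorem sum_choose_nsmul_of_eq_add {M : Type*} [AddCommMonoid M] (f : ℕ → ℕ → M)
    (hf : ∀ p q, f p q = f (p + 1) q + f p (q + 1)) (n p q : ℕ) :
    ∑ i ∈ range (n + 1), n.choose i • f (p + i) (q + (n - i)) = f p q := by
  induction n generalizing p q with
  | zero => simp
  | succ n ih =>
    rw [sum_choose_succ_nsmul (fun i k ↦ f (p + i) (q + k)), hf p q, add_comm,
      ← ih (p + 1) q, ← ih p (q + 1)]
    congr 1 <;> refine sum_congr rfl fun i hi ↦ ?_
    · rw [add_right_comm, add_assoc]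
    · have : i ≤ n := Nat.lt_succ_iff.mp (mem_range.mp hi)
      rw [show q + (n + 1 - i) = q + 1 + (n - i) by omega]

def factorialBeta (p q : ℕ) : ℚ := p ! * q ! / (p + q + 1)!

theorem factorialBeta_eq_add (p q : ℕ) :
    factorialBeta p q = factorialBeta (p + 1) q + factorialBeta p (q + 1) := by
  simp only [factorialBeta, show p + 1 + q + 1 = p + q + 1 + 1 by ring,
    show p + (q + 1) + 1 = p + q + 1 + 1 by ring, factorial_succ]
  push_cast
  field_simp
  ring

theorem succ_mul_factorialBeta (p q : ℕ) :
    ((q : ℚ) + 1) * factorialBeta p q = ((p : ℚ) + q + 2) * factorialBeta p (q + 1) := by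
  simp only [factorialBeta, show p + (q + 1) + 1 = p + q + 1 + 1 by ring, factorial_succ]
  push_cast
  field_simp
  ring

theorem factorialBeta_zero_left (n : ℕ) : factorialBeta 0 n = 1 / (n + 1) := by
  simp only [factorialBeta, zero_add, factorial_succ, factorial_zero]
  push_cast
  field_simp

theorem sum_choose_mul_factorialBeta (n p q : ℕ) :
    ∑ i ∈ range (n + 1), (n.choose i : ℚ) * factorialBeta (p + i) (q + (n - i))
      = factorialBeta p q := by
  simpa only [nsmul_eq_mul] using sum_choose_nsmul_of_eq_add _ factorialBeta_eq_add n p q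

theorem sum_choose_mul_factorial_mul_factorial_div (c m i : ℕ) (hi : i < m) :
    ∑ j ∈ range (c + 1), (c.choose j : ℚ) * (i + j)! * (m + c - i - j - 1)! / (m + c)!
      = factorialBeta i (m - 1 - i) := by
  rw [← sum_choose_mul_factorialBeta c i]
  refine sum_congr rfl fun j hj ↦ ?_
  have hjc : j ≤ c := Nat.lt_succ_iff.mp (mem_range.mp hj)
  rw [factorialBeta, show m - 1 - i + (c - j) = m + c - i - j - 1 by omega,
    show i + j + (m + c - i - j - 1) + 1 = m + c by omega]
  ring

theorem GS_bottom_double_sum (a b c : ℕ) (hb : 1 ≤ b) :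
    ∑ i ∈ Finset.range (b + 1), ∑ j ∈ Finset.range (c + 1),
        ((c.choose j : ℚ) * (b.choose i) * (i + j)! * (a + b - i)
            * (a + 2 * b + c - i - j - 1)!) / ((a + 2 * b + c)! : ℚ)
      = 1 - (b : ℚ) / (((b : ℚ) + a + 1) * ((b : ℚ) + a)) := by
  calc _ = ∑ i ∈ range (b + 1),
          b.choose i * ((a : ℚ) + b - i) * factorialBeta i (a + 2 * b - 1 - i) := by
        refine sum_congr rfl fun i hi ↦ ?_
        rw [← sum_choose_mul_factorial_mul_factorial_div c (a + 2 * b) i (by grind), mul_sum]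
        exact sum_congr rfl fun j _ ↦ by ring
    _ = (a + 2 * b + 1) * ∑ i ∈ range (b + 1),
          b.choose i * factorialBeta (0 + i) (a + b + (b - i))
        - b * ∑ i ∈ range (b + 1), b.choose i * factorialBeta (0 + i) (a + b - 1 + (b - i)) := by
        rw [mul_sum, mul_sum, ← sum_sub_distrib]
        refine sum_congr rfl fun i hi ↦ ?_
        set q := a + 2 * b - 1 - i
        rw [zero_add, show a + b + (b - i) = q + 1 by grind, show a + b - 1 + (b - i) = q by grind]
        have hq : (q : ℚ) + i + 1 = a + 2 * b := by
          exact_mod_cast (by grind : q + i + 1 = a + 2 * b)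
        linear_combination (b.choose i : ℚ) * succ_mul_factorialBeta i q
          - (b.choose i : ℚ) * (factorialBeta i q - factorialBeta i (q + 1)) * hq
    _ = (a + 2 * b + 1) / (a + b + 1) - b / (a + b) := by
        rw [sum_choose_mul_factorialBeta, sum_choose_mul_factorialBeta, factorialBeta_zero_left,
          factorialBeta_zero_left, Nat.cast_sub (by omega : 1 ≤ a + b), Nat.cast_add,
          Nat.cast_one, sub_add_cancel]
        ring
    _ = _ := by
        have hab : (a : ℚ) + b ≠ 0 := by positivity
        field_simp
        ring
end
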